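/- arXiv:2506.11426 — 3 statements merged into one kernel-verified Lean document; each statement's English description precedes it below -/
import Mathlib

section
/- Let Ω ⊆ ℂ² be a nonempty open set, let a, b, c be holomorphic on Ω, and suppose the invariant k = ∂y b + a·b − c is nowhere vanishing on Ω. Define a₋ = a, b₋ = b − (∂x k)/k, c₋ = c + ∂x a − ∂y b − a·(∂x k)/k. Then: (i) if u is holomorphic on Ω with ∂x∂y u + a·∂x u + b·∂y u + c·u = 0, then u₋ := ∂x u + b·u satisfies ∂x∂y u₋ + a₋·∂x u₋ + b₋·∂y u₋ + c₋·u₋ = 0; and (ii) the invariants h₋ = ∂x a₋ + a₋·b₋ − c₋ and k₋ = ∂y b₋ + a₋·b₋ − c₋ satisfy h₋ = k and k₋ = 2k − h − ∂x((∂y k)/k), where h = ∂x a + a·b − c. -/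
/-- Partial derivative in the first (x) variable of a function on ℂ². -/
noncomputable def pdx (u : ℂ × ℂ → ℂ) : ℂ × ℂ → ℂ :=
  fun p => deriv (fun t => u (t, p.2)) p.1

/-- Partial derivative in the second (y) variable of a function on ℂ². -/
noncomputable def pdy (u : ℂ × ℂ → ℂ) : ℂ × ℂ → ℂ :=
  fun p => deriv (fun t => u (p.1, t)) p.2

/-!
The Laplace transformation rests on the factorization `M = (∂y + a)(∂x + b) - k`: for a solution
`u`, the function `u₋ = (∂x + b) u` satisfies `(∂y + a) u₋ = k u`, and applying `∂x + b` to
`u = (∂y + a) u₋ / k` gives the transformed equation. The invariants of the new operator are then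
pure algebra, once one knows that `∂x ∂y = ∂y ∂x` on holomorphic functions.

That analytic input comes from Cauchy's formula on a polydisc: near any point, a holomorphic `f`
is an integral over a torus of `f` against the kernel `(ξ - x)⁻¹ (η - y)⁻¹`, which may be
differentiated under the integral sign as often as needed, with
`∂x ∂y f = ∂y ∂x f = (2πi)⁻² ∬ f(ξ, η) (ξ - x)⁻² (η - y)⁻² dξ dη`.
-/

open Complex Metric MeasureTheory Set Filter
open scoped Topology Real

section PartialDerivatives

variable {f g : ℂ × ℂ → ℂ} {p : ℂ × ℂ}

theorem HasFDerivAt.pdx_eq {L : ℂ × ℂ →L[ℂ] ℂ} (hf : HasFDerivAt f L p) : pdx f p = L (1, 0) :=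
  (hf.comp_hasDerivAt p.1 ((hasDerivAt_id p.1).prodMk (hasDerivAt_const p.1 p.2))).deriv

theorem HasFDerivAt.pdy_eq {L : ℂ × ℂ →L[ℂ] ℂ} (hf : HasFDerivAt f L p) : pdy f p = L (0, 1) :=
  (hf.comp_hasDerivAt p.2 ((hasDerivAt_const p.2 p.1).prodMk (hasDerivAt_id p.2))).deriv

theorem DifferentiableAt.hasDerivAt_slice_fst (hf : DifferentiableAt ℂ f p) :
    HasDerivAt (fun t => f (t, p.2)) (pdx f p) p.1 :=
  (hf.comp p.1 (differentiableAt_id.prodMk (differentiableAt_const _))).hasDerivAt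

theorem DifferentiableAt.hasDerivAt_slice_snd (hf : DifferentiableAt ℂ f p) :
    HasDerivAt (fun t => f (p.1, t)) (pdy f p) p.2 :=
  (hf.comp p.2 ((differentiableAt_const _).prodMk differentiableAt_id)).hasDerivAt

theorem pdx_sub (hf : DifferentiableAt ℂ f p) (hg : DifferentiableAt ℂ g p) :
    pdx (fun q => f q - g q) p = pdx f p - pdx g p :=
  (hf.hasDerivAt_slice_fst.sub hg.hasDerivAt_slice_fst).deriv

theorem pdx_mul (hf : DifferentiableAt ℂ f p) (hg : DifferentiableAt ℂ g p) :
    pdx (fun q => f q * g q) p = pdx f p * g p + f p * pdx g p :=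
  (hf.hasDerivAt_slice_fst.mul hg.hasDerivAt_slice_fst).deriv

theorem pdx_div (hf : DifferentiableAt ℂ f p) (hg : DifferentiableAt ℂ g p)
    (hg0 : g p ≠ 0) :
    pdx (fun q => f q / g q) p = (pdx f p * g p - f p * pdx g p) / g p ^ 2 :=
  (hf.hasDerivAt_slice_fst.div hg.hasDerivAt_slice_fst hg0).deriv

theorem pdy_add (hf : DifferentiableAt ℂ f p) (hg : DifferentiableAt ℂ g p) :
    pdy (fun q => f q + g q) p = pdy f p + pdy g p :=
  (hf.hasDerivAt_slice_snd.add hg.hasDerivAt_slice_snd).deriv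

theorem pdy_sub (hf : DifferentiableAt ℂ f p) (hg : DifferentiableAt ℂ g p) :
    pdy (fun q => f q - g q) p = pdy f p - pdy g p :=
  (hf.hasDerivAt_slice_snd.sub hg.hasDerivAt_slice_snd).deriv

theorem pdy_mul (hf : DifferentiableAt ℂ f p) (hg : DifferentiableAt ℂ g p) :
    pdy (fun q => f q * g q) p = pdy f p * g p + f p * pdy g p :=
  (hf.hasDerivAt_slice_snd.mul hg.hasDerivAt_slice_snd).deriv

theorem pdy_div (hf : DifferentiableAt ℂ f p) (hg : DifferentiableAt ℂ g p)
    (hg0 : g p ≠ 0) :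
    pdy (fun q => f q / g q) p = (pdy f p * g p - f p * pdy g p) / g p ^ 2 :=
  (hf.hasDerivAt_slice_snd.div hg.hasDerivAt_slice_snd hg0).deriv

theorem Filter.EventuallyEq.pdx_eq (h : f =ᶠ[𝓝 p] g) : pdx f p = pdx g p :=
  (h.comp_tendsto ((continuous_id.prodMk continuous_const).tendsto' p.1 p rfl)).deriv_eq

theorem Filter.EventuallyEq.pdy_eq (h : f =ᶠ[𝓝 p] g) : pdy f p = pdy g p :=
  (h.comp_tendsto ((continuous_const.prodMk continuous_id).tendsto' p.2 p rfl)).deriv_eq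

protected theorem Filter.EventuallyEq.pdx (h : f =ᶠ[𝓝 p] g) : pdx f =ᶠ[𝓝 p] pdx g :=
  h.eventuallyEq_nhds.mono fun _ => Filter.EventuallyEq.pdx_eq

protected theorem Filter.EventuallyEq.pdy (h : f =ᶠ[𝓝 p] g) : pdy f =ᶠ[𝓝 p] pdy g :=
  h.eventuallyEq_nhds.mono fun _ => Filter.EventuallyEq.pdy_eq

end PartialDerivatives

section CauchyIntegral

variable {x₀ y₀ : ℂ} {R r : ℝ} {m n : ℕ} {q : ℂ × ℂ}

noncomputable def torusMeasure : Measure (ℝ × ℝ) :=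
  (volume.restrict (Ioc 0 (2 * π))).prod (volume.restrict (Ioc 0 (2 * π)))

instance : IsFiniteMeasure torusMeasure := by
  unfold torusMeasure; infer_instance

noncomputable def torusWeight (g : ℂ × ℂ → ℂ) (x₀ y₀ : ℂ) (R : ℝ) (θ : ℝ × ℝ) : ℂ :=
  deriv (circleMap x₀ R) θ.1 * (deriv (circleMap y₀ R) θ.2 *
    g (circleMap x₀ R θ.1, circleMap y₀ R θ.2))

noncomputable def cauchyKernel (x₀ y₀ : ℂ) (R : ℝ) (m n : ℕ) (q : ℂ × ℂ) (θ : ℝ × ℝ) : ℂ :=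
  (circleMap x₀ R θ.1 - q.1) ^ (-(m : ℤ)) * (circleMap y₀ R θ.2 - q.2) ^ (-(n : ℤ))

/-- Up to the factor `(2πi)⁻² (m-1)! (n-1)!`, this is `∂xᵐ⁻¹ ∂yⁿ⁻¹ f q` (Cauchy's formula). -/
noncomputable def cauchyTransform (f : ℂ × ℂ → ℂ) (x₀ y₀ : ℂ) (R : ℝ) (m n : ℕ) (q : ℂ × ℂ) : ℂ :=
  ∫ θ, torusWeight f x₀ y₀ R θ * cauchyKernel x₀ y₀ R m n q θ ∂torusMeasure

theorem sub_le_norm_circleMap_sub {c w : ℂ} (hR : 0 ≤ R) (hw : dist w c ≤ r) (θ : ℝ) :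
    R - r ≤ ‖circleMap c R θ - w‖ := by
  have h := norm_sub_le_norm_sub_add_norm_sub (circleMap c R θ) w c
  rw [circleMap_sub_center, norm_circleMap_zero, abs_of_nonneg hR, ← dist_eq_norm w] at h
  linarith

theorem circleMap_sub_ne_zero {c w : ℂ} (hw : dist w c < R) (θ : ℝ) : circleMap c R θ - w ≠ 0 :=
  sub_ne_zero.2 fun h => circleMap_notMem_ball c R θ (h ▸ hw)

theorem norm_cauchyKernel_le (hr : r < R) (h₁ : dist q.1 x₀ ≤ r) (h₂ : dist q.2 y₀ ≤ r)
    (θ : ℝ × ℝ) : ‖cauchyKernel x₀ y₀ R m n q θ‖ ≤ ((R - r) ^ m)⁻¹ * ((R - r) ^ n)⁻¹ := by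
  have hRr : 0 < R - r := sub_pos.2 hr
  have hR : 0 ≤ R := (dist_nonneg.trans h₁).trans hr.le
  have bound : ∀ {c w : ℂ} {k : ℕ} (φ : ℝ), dist w c ≤ r →
      ‖(circleMap c R φ - w) ^ (-(k : ℤ))‖ ≤ ((R - r) ^ k)⁻¹ := fun φ hw => by
    rw [norm_zpow, zpow_neg, zpow_natCast]
    exact inv_anti₀ (pow_pos hRr _) (pow_le_pow_left₀ hRr.le (sub_le_norm_circleMap_sub hR hw φ) _)
  rw [cauchyKernel, norm_mul]
  exact mul_le_mul (bound θ.1 h₁) (bound θ.2 h₂) (norm_nonneg _) (by positivity)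

theorem continuous_cauchyKernel (h₁ : dist q.1 x₀ < R) (h₂ : dist q.2 y₀ < R) :
    Continuous (cauchyKernel x₀ y₀ R m n q) :=
  ((((continuous_circleMap x₀ R).comp continuous_fst).sub continuous_const).zpow₀ _
      fun θ => Or.inl (circleMap_sub_ne_zero h₁ θ.1)).mul
    ((((continuous_circleMap y₀ R).comp continuous_snd).sub continuous_const).zpow₀ _
      fun θ => Or.inl (circleMap_sub_ne_zero h₂ θ.2))

theorem hasDerivAt_sub_zpow_neg {s w : ℂ} (hsw : s - w ≠ 0) (k : ℕ) :
    HasDerivAt (fun x : ℂ => (s - x) ^ (-(k : ℤ))) (k * (s - w) ^ (-((k + 1 : ℕ) : ℤ))) w := by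
  refine ((hasDerivAt_zpow (-(k : ℤ)) (s - w) (Or.inl hsw)).comp w
    ((hasDerivAt_id w).const_sub s)).congr_deriv ?_
  rw [show -(k : ℤ) - 1 = -((k + 1 : ℕ) : ℤ) by push_cast; ring]
  push_cast
  ring

theorem hasFDerivAt_cauchyKernel (θ : ℝ × ℝ) (h₁ : circleMap x₀ R θ.1 - q.1 ≠ 0)
    (h₂ : circleMap y₀ R θ.2 - q.2 ≠ 0) :
    HasFDerivAt (fun q => cauchyKernel x₀ y₀ R m n q θ)
      ((m * cauchyKernel x₀ y₀ R (m + 1) n q θ) • ContinuousLinearMap.fst ℂ ℂ ℂ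
        + (n * cauchyKernel x₀ y₀ R m (n + 1) q θ) • ContinuousLinearMap.snd ℂ ℂ ℂ) q := by
  have hx := (hasDerivAt_sub_zpow_neg h₁ m).comp_hasFDerivAt q (hasFDerivAt_fst (𝕜 := ℂ) (p := q))
  have hy := (hasDerivAt_sub_zpow_neg h₂ n).comp_hasFDerivAt q (hasFDerivAt_snd (𝕜 := ℂ) (p := q))
  refine (hx.mul hy).congr_fderiv ?_
  ext <;> simp [cauchyKernel] <;> ring

theorem continuous_torusWeight {g : ℂ × ℂ → ℂ} (hR : 0 ≤ R)
    (hg : ContinuousOn g (sphere x₀ R ×ˢ sphere y₀ R)) : Continuous (torusWeight g x₀ y₀ R) := by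
  have hmap : Continuous fun θ : ℝ × ℝ => (circleMap x₀ R θ.1, circleMap y₀ R θ.2) :=
    ((continuous_circleMap x₀ R).comp continuous_fst).prodMk
      ((continuous_circleMap y₀ R).comp continuous_snd)
  have hgθ := hg.comp_continuous hmap fun θ =>
    ⟨circleMap_mem_sphere x₀ hR θ.1, circleMap_mem_sphere y₀ hR θ.2⟩
  unfold torusWeight
  simp only [deriv_circleMap]
  exact Continuous.mul (by fun_prop) (Continuous.mul (by fun_prop) hgθ)

theorem exists_norm_torusWeight_le {g : ℂ × ℂ → ℂ} (hR : 0 ≤ R)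
    (hg : ContinuousOn g (sphere x₀ R ×ˢ sphere y₀ R)) :
    ∃ M, ∀ θ, ‖torusWeight g x₀ y₀ R θ‖ ≤ M := by
  obtain ⟨C, hC⟩ :=
    ((isCompact_sphere x₀ R).prod (isCompact_sphere y₀ R)).exists_bound_of_continuousOn hg
  refine ⟨R * (R * C), fun θ => ?_⟩
  simp only [torusWeight, deriv_circleMap, norm_mul, norm_circleMap_zero, norm_I, abs_of_nonneg hR,
    mul_one]
  gcongr
  exact hC _ ⟨circleMap_mem_sphere x₀ hR θ.1, circleMap_mem_sphere y₀ hR θ.2⟩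

theorem norm_smul_fst_add_smul_snd_le (α β : ℂ) :
    ‖α • ContinuousLinearMap.fst ℂ ℂ ℂ + β • ContinuousLinearMap.snd ℂ ℂ ℂ‖ ≤ ‖α‖ + ‖β‖ :=
  (norm_add_le _ _).trans (add_le_add
    ((norm_smul_le _ _).trans (mul_le_of_le_one_right (norm_nonneg _)
      (ContinuousLinearMap.norm_fst_le ℂ ℂ ℂ)))
    ((norm_smul_le _ _).trans (mul_le_of_le_one_right (norm_nonneg _)
      (ContinuousLinearMap.norm_snd_le ℂ ℂ ℂ))))

variable {f : ℂ × ℂ → ℂ}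

theorem norm_torusWeight_mul_cauchyKernel_le {M : ℝ} (hM : ∀ θ, ‖torusWeight f x₀ y₀ R θ‖ ≤ M)
    (hr : r < R) (h₁ : dist q.1 x₀ ≤ r) (h₂ : dist q.2 y₀ ≤ r) (θ : ℝ × ℝ) :
    ‖torusWeight f x₀ y₀ R θ * cauchyKernel x₀ y₀ R m n q θ‖
      ≤ M * (((R - r) ^ m)⁻¹ * ((R - r) ^ n)⁻¹) := by
  rw [norm_mul]
  exact mul_le_mul (hM θ) (norm_cauchyKernel_le hr h₁ h₂ θ) (norm_nonneg _)
    ((norm_nonneg _).trans (hM θ))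

theorem integrable_torusWeight_mul_cauchyKernel
    (hf : ContinuousOn f (sphere x₀ R ×ˢ sphere y₀ R)) (hq : q ∈ ball x₀ R ×ˢ ball y₀ R) :
    Integrable (fun θ => torusWeight f x₀ y₀ R θ * cauchyKernel x₀ y₀ R m n q θ) torusMeasure := by
  have hR : 0 ≤ R := dist_nonneg.trans (mem_ball.1 hq.1).le
  obtain ⟨M, hM⟩ := exists_norm_torusWeight_le hR hf
  exact Integrable.of_bound (((continuous_torusWeight hR hf).mul
    (continuous_cauchyKernel hq.1 hq.2)).aestronglyMeasurable) _ (ae_of_all _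
      (norm_torusWeight_mul_cauchyKernel_le hM (max_lt hq.1 hq.2) (le_max_left _ _)
        (le_max_right _ _)))

theorem exists_lt_ball_prod_mem_nhds (hq : q ∈ ball x₀ R ×ˢ ball y₀ R) :
    ∃ r < R, ball x₀ r ×ˢ ball y₀ r ∈ 𝓝 q := by
  obtain ⟨r, hqr, hrR⟩ := exists_between (max_lt (mem_ball.1 hq.1) (mem_ball.1 hq.2))
  exact ⟨r, hrR, (isOpen_ball.prod isOpen_ball).mem_nhds
    ⟨(le_max_left _ _).trans_lt hqr, (le_max_right _ _).trans_lt hqr⟩⟩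

theorem hasFDerivAt_torusWeight_mul_cauchyKernel (hq : q ∈ ball x₀ R ×ˢ ball y₀ R) (θ : ℝ × ℝ) :
    HasFDerivAt (fun q => torusWeight f x₀ y₀ R θ * cauchyKernel x₀ y₀ R m n q θ)
      ((m * (torusWeight f x₀ y₀ R θ * cauchyKernel x₀ y₀ R (m + 1) n q θ))
          • ContinuousLinearMap.fst ℂ ℂ ℂ
        + (n * (torusWeight f x₀ y₀ R θ * cauchyKernel x₀ y₀ R m (n + 1) q θ))
          • ContinuousLinearMap.snd ℂ ℂ ℂ) q := by
  refine ((hasFDerivAt_cauchyKernel θ (circleMap_sub_ne_zero hq.1 θ.1)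
    (circleMap_sub_ne_zero hq.2 θ.2)).const_mul _).congr_fderiv ?_
  ext <;> simp <;> ring

theorem hasFDerivAt_cauchyTransform (hf : ContinuousOn f (sphere x₀ R ×ˢ sphere y₀ R))
    (hq : q ∈ ball x₀ R ×ˢ ball y₀ R) :
    HasFDerivAt (cauchyTransform f x₀ y₀ R m n)
      ((m * cauchyTransform f x₀ y₀ R (m + 1) n q) • ContinuousLinearMap.fst ℂ ℂ ℂ
        + (n * cauchyTransform f x₀ y₀ R m (n + 1) q) • ContinuousLinearMap.snd ℂ ℂ ℂ) q := by
  set w := torusWeight f x₀ y₀ R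
  set K := cauchyKernel x₀ y₀ R
  have hR : 0 ≤ R := dist_nonneg.trans (mem_ball.1 hq.1).le
  obtain ⟨M, hM⟩ := exists_norm_torusWeight_le hR hf
  obtain ⟨r, hrR, hU⟩ := exists_lt_ball_prod_mem_nhds hq
  have hUR : ∀ q' ∈ ball x₀ r ×ˢ ball y₀ r, q' ∈ ball x₀ R ×ˢ ball y₀ R := fun q' hq' =>
    ⟨hq'.1.trans hrR, hq'.2.trans hrR⟩
  set C : ℕ → ℕ → ℝ := fun i j => M * (((R - r) ^ i)⁻¹ * ((R - r) ^ j)⁻¹)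
  have hF' : ∀ θ, ∀ q' ∈ ball x₀ r ×ˢ ball y₀ r,
      ‖(m * (w θ * K (m + 1) n q' θ)) • ContinuousLinearMap.fst ℂ ℂ ℂ
        + (n * (w θ * K m (n + 1) q' θ)) • ContinuousLinearMap.snd ℂ ℂ ℂ‖
      ≤ m * C (m + 1) n + n * C m (n + 1) := fun θ q' hq' => calc
    _ ≤ ‖(m : ℂ) * (w θ * K (m + 1) n q' θ)‖ + ‖(n : ℂ) * (w θ * K m (n + 1) q' θ)‖ :=
        norm_smul_fst_add_smul_snd_le _ _
    _ = m * ‖w θ * K (m + 1) n q' θ‖ + n * ‖w θ * K m (n + 1) q' θ‖ := by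
        simp only [norm_mul, Complex.norm_natCast]
    _ ≤ m * C (m + 1) n + n * C m (n + 1) := by
        gcongr <;> exact norm_torusWeight_mul_cauchyKernel_le hM hrR hq'.1.le hq'.2.le θ
  have hwK : ∀ i j, Integrable (fun θ => w θ * K i j q θ) torusMeasure := fun _ _ =>
    integrable_torusWeight_mul_cauchyKernel hf hq
  have hcont : ∀ i j, Continuous fun θ => w θ * K i j q θ := fun _ _ =>
    (continuous_torusWeight hR hf).mul (continuous_cauchyKernel hq.1 hq.2)
  refine (hasFDerivAt_integral_of_dominated_of_fderiv_le hU
    (eventually_of_mem hU fun q' hq' =>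
      (integrable_torusWeight_mul_cauchyKernel hf (hUR q' hq')).aestronglyMeasurable)
    (hwK m n)
    ((((continuous_const.mul (hcont _ _)).smul continuous_const).add
      ((continuous_const.mul (hcont _ _)).smul continuous_const)).aestronglyMeasurable)
    (ae_of_all _ hF') (integrable_const _)
    (ae_of_all _ fun θ q' hq' =>
      hasFDerivAt_torusWeight_mul_cauchyKernel (hUR q' hq') θ)).congr_fderiv ?_
  rw [integral_add ((hwK _ _).const_mul _ |>.smul_const _) ((hwK _ _).const_mul _ |>.smul_const _),
    integral_smul_const, integral_smul_const, integral_const_mul, integral_const_mul]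
  rfl

theorem circleIntegral_circleIntegral_eq_integral_torusWeight {g : ℂ × ℂ → ℂ} (hR : 0 ≤ R)
    (hg : ContinuousOn g (sphere x₀ R ×ˢ sphere y₀ R)) :
    (∮ z in C(x₀, R), ∮ w in C(y₀, R), g (z, w)) = ∫ θ, torusWeight g x₀ y₀ R θ ∂torusMeasure := by
  obtain ⟨M, hM⟩ := exists_norm_torusWeight_le hR hg
  have hint : Integrable (torusWeight g x₀ y₀ R) torusMeasure :=
    Integrable.of_bound (continuous_torusWeight hR hg).aestronglyMeasurable M (ae_of_all _ hM)
  simp only [circleIntegral, smul_eq_mul,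
    intervalIntegral.integral_of_le (by positivity : (0 : ℝ) ≤ 2 * π), ← integral_const_mul]
  exact integral_integral (f := fun θ φ => torusWeight g x₀ y₀ R (θ, φ)) hint

theorem eq_cauchyTransform (hf : DifferentiableOn ℂ f (closedBall x₀ R ×ˢ closedBall y₀ R))
    (hq : q ∈ ball x₀ R ×ˢ ball y₀ R) :
    f q = ((2 * π * I) ^ 2)⁻¹ * cauchyTransform f x₀ y₀ R 1 1 q := by
  have hR : 0 ≤ R := dist_nonneg.trans (mem_ball.1 hq.1).le
  have hsphere := prod_mono (sphere_subset_closedBall (x := x₀) (ε := R))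
    (sphere_subset_closedBall (x := y₀) (ε := R))
  have inner : ∀ z ∈ closedBall x₀ R,
      (∮ w in C(y₀, R), (w - q.2)⁻¹ * f (z, w)) = 2 * π * I * f (z, q.2) := fun z hz =>
    (hf.comp (differentiableOn_const z |>.prodMk differentiableOn_id)
      fun w hw => ⟨hz, hw⟩).circleIntegral_sub_inv_smul hq.2
  have outer : (∮ z in C(x₀, R), (z - q.1)⁻¹ * f (z, q.2)) = 2 * π * I * f q :=
    (hf.comp (differentiableOn_id.prodMk (differentiableOn_const q.2))
      fun z hz => ⟨hz, ball_subset_closedBall hq.2⟩).circleIntegral_sub_inv_smul hq.1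
  have hg : ContinuousOn (fun z : ℂ × ℂ => (z.1 - q.1)⁻¹ * ((z.2 - q.2)⁻¹ * f z))
      (sphere x₀ R ×ˢ sphere y₀ R) := by
    have hne : ∀ {c w z : ℂ}, w ∈ ball c R → z ∈ sphere c R → z - w ≠ 0 := fun hw hz h =>
      (mem_ball.1 hw).ne (sub_eq_zero.1 h ▸ mem_sphere.1 hz)
    exact ((continuous_fst.sub continuous_const).continuousOn.inv₀ fun z hz => hne hq.1 hz.1).mul
      (((continuous_snd.sub continuous_const).continuousOn.inv₀ fun z hz => hne hq.2 hz.2).mul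
        (hf.continuousOn.mono hsphere))
  have double : (∮ z in C(x₀, R), ∮ w in C(y₀, R), (z - q.1)⁻¹ * ((w - q.2)⁻¹ * f (z, w)))
      = (2 * π * I) ^ 2 * f q := calc
    _ = ∮ z in C(x₀, R), 2 * π * I * ((z - q.1)⁻¹ * f (z, q.2)) :=
        circleIntegral.integral_congr hR fun z hz => by
          simp only [circleIntegral.integral_const_mul, inner z (sphere_subset_closedBall hz)]
          ring
    _ = (2 * π * I) ^ 2 * f q := by rw [circleIntegral.integral_const_mul, outer]; ring
  rw [cauchyTransform, ← integral_congr_ae (ae_of_all _ fun θ => ?_),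
    ← circleIntegral_circleIntegral_eq_integral_torusWeight hR hg, double]
  · field_simp
  · simp only [torusWeight, cauchyKernel, Nat.cast_one, zpow_neg_one]
    ring

end CauchyIntegral

section Holomorphic

variable {Ω : Set (ℂ × ℂ)} {f : ℂ × ℂ → ℂ} {p : ℂ × ℂ}

theorem exists_closedBall_prod_subset (hΩ : IsOpen Ω) (hp : p ∈ Ω) :
    ∃ R > 0, closedBall p.1 R ×ˢ closedBall p.2 R ⊆ Ω := by
  obtain ⟨ε, hε, hball⟩ := Metric.isOpen_iff.1 hΩ p hp
  refine ⟨ε / 2, by positivity, ?_⟩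
  rw [closedBall_prod_same]
  exact (closedBall_subset_ball (by linarith)).trans hball

theorem DifferentiableOn.differentiableAt_pdx_pdy_and_comm (hf : DifferentiableOn ℂ f Ω)
    (hΩ : IsOpen Ω) (hp : p ∈ Ω) :
    DifferentiableAt ℂ (pdx f) p ∧ DifferentiableAt ℂ (pdy f) p ∧
      pdx (pdy f) p = pdy (pdx f) p := by
  obtain ⟨R, hR, hsub⟩ := exists_closedBall_prod_subset hΩ hp
  set T := cauchyTransform f p.1 p.2 R
  set κ : ℂ := ((2 * π * I) ^ 2)⁻¹
  have hd := hf.mono hsub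
  have hcont : ContinuousOn f (sphere p.1 R ×ˢ sphere p.2 R) :=
    hd.continuousOn.mono (prod_mono sphere_subset_closedBall sphere_subset_closedBall)
  have hpP : p ∈ ball p.1 R ×ˢ ball p.2 R := ⟨mem_ball_self hR, mem_ball_self hR⟩
  have hP : ball p.1 R ×ˢ ball p.2 R ∈ 𝓝 p := (isOpen_ball.prod isOpen_ball).mem_nhds hpP
  have hT : ∀ m n, ∀ q ∈ ball p.1 R ×ˢ ball p.2 R, HasFDerivAt (fun q => κ * T m n q)
      (κ • ((m * T (m + 1) n q) • ContinuousLinearMap.fst ℂ ℂ ℂ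
        + (n * T m (n + 1) q) • ContinuousLinearMap.snd ℂ ℂ ℂ)) q := fun m n q hq =>
    (hasFDerivAt_cauchyTransform hcont hq).const_mul κ
  have hfT : f =ᶠ[𝓝 p] fun q => κ * T 1 1 q :=
    eventually_of_mem hP fun q hq => eq_cauchyTransform hd hq
  have hxf : pdx f =ᶠ[𝓝 p] fun q => κ * T 2 1 q :=
    hfT.pdx.trans (eventually_of_mem hP fun q hq => by simpa using (hT 1 1 q hq).pdx_eq)
  have hyf : pdy f =ᶠ[𝓝 p] fun q => κ * T 1 2 q :=
    hfT.pdy.trans (eventually_of_mem hP fun q hq => by simpa using (hT 1 1 q hq).pdy_eq)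
  refine ⟨hxf.differentiableAt_iff.2 (hT 2 1 p hpP).differentiableAt,
    hyf.differentiableAt_iff.2 (hT 1 2 p hpP).differentiableAt, ?_⟩
  rw [hyf.pdx_eq, hxf.pdy_eq]
  simp [(hT 1 2 p hpP).pdx_eq, (hT 2 1 p hpP).pdy_eq]

protected theorem DifferentiableOn.pdx (hf : DifferentiableOn ℂ f Ω) (hΩ : IsOpen Ω) :
    DifferentiableOn ℂ (pdx f) Ω := fun _ hp =>
  (hf.differentiableAt_pdx_pdy_and_comm hΩ hp).1.differentiableWithinAt

protected theorem DifferentiableOn.pdy (hf : DifferentiableOn ℂ f Ω) (hΩ : IsOpen Ω) :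
    DifferentiableOn ℂ (pdy f) Ω := fun _ hp =>
  (hf.differentiableAt_pdx_pdy_and_comm hΩ hp).2.1.differentiableWithinAt

theorem DifferentiableOn.pdx_pdy_comm (hf : DifferentiableOn ℂ f Ω) (hΩ : IsOpen Ω) (hp : p ∈ Ω) :
    pdx (pdy f) p = pdy (pdx f) p :=
  (hf.differentiableAt_pdx_pdy_and_comm hΩ hp).2.2

end Holomorphic

section Laplace

variable {Ω : Set (ℂ × ℂ)} {a b c k u : ℂ × ℂ → ℂ} {p : ℂ × ℂ}

theorem pdy_laplaceMinus_eq (hΩ : IsOpen Ω) (hb : DifferentiableOn ℂ b Ω)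
    (hu : DifferentiableOn ℂ u Ω) (hp : p ∈ Ω)
    (hMu : pdx (pdy u) p + a p * pdx u p + b p * pdy u p + c p * u p = 0) :
    pdy (fun q => pdx u q + b q * u q) p
      = (pdy b p + a p * b p - c p) * u p - a p * (pdx u p + b p * u p) := by
  have hpn := hΩ.mem_nhds hp
  rw [pdy_add ((hu.pdx hΩ).differentiableAt hpn) ((hb.differentiableAt hpn).fun_mul
    (hu.differentiableAt hpn)), pdy_mul (hb.differentiableAt hpn) (hu.differentiableAt hpn),
    ← hu.pdx_pdy_comm hΩ hp]
  linear_combination hMu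

theorem laplaceMinus_solves (hΩ : IsOpen Ω) (ha : DifferentiableOn ℂ a Ω)
    (hb : DifferentiableOn ℂ b Ω) (hkd : DifferentiableOn ℂ k Ω)
    (hk : k = fun p => pdy b p + a p * b p - c p) (hu : DifferentiableOn ℂ u Ω)
    (hMu : ∀ p ∈ Ω, pdx (pdy u) p + a p * pdx u p + b p * pdy u p + c p * u p = 0)
    (hp : p ∈ Ω) (hk0 : k p ≠ 0) :
    pdx (pdy (fun q => pdx u q + b q * u q)) p
      + a p * pdx (fun q => pdx u q + b q * u q) p
      + (b p - pdx k p / k p) * pdy (fun q => pdx u q + b q * u q) p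
      + (c p + pdx a p - pdy b p - a p * (pdx k p / k p)) * (pdx u p + b p * u p) = 0 := by
  set v := fun q => pdx u q + b q * u q
  have hpn := hΩ.mem_nhds hp
  have hv : DifferentiableOn ℂ v Ω := (hu.pdx hΩ).add (hb.mul hu)
  -- the factorization `M = (∂y + a)(∂x + b) - k`
  have hyv : ∀ q ∈ Ω, pdy v q = k q * u q - a q * v q := fun q hq => by
    rw [pdy_laplaceMinus_eq hΩ hb hu hq (hMu q hq), hk]
  have hxyv : pdx (pdy v) p = pdx k p * u p + k p * pdx u p - (pdx a p * v p + a p * pdx v p) := by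
    rw [(eventuallyEq_of_mem (g := fun q => k q * u q - a q * v q) hpn hyv).pdx_eq,
      pdx_sub ((hkd.differentiableAt hpn).fun_mul (hu.differentiableAt hpn))
        ((ha.differentiableAt hpn).fun_mul (hv.differentiableAt hpn)),
      pdx_mul (hkd.differentiableAt hpn) (hu.differentiableAt hpn),
      pdx_mul (ha.differentiableAt hpn) (hv.differentiableAt hpn)]
  have hkp : k p = pdy b p + a p * b p - c p := by rw [hk]
  have hkinv : k p * (k p)⁻¹ = 1 := mul_inv_cancel₀ hk0
  rw [hxyv, hyv p hp]
  linear_combination v p * hkp - pdx k p * u p * hkinv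

theorem pdy_pdx_div_eq_pdx_pdy_div (hΩ : IsOpen Ω) (hkd : DifferentiableOn ℂ k Ω) (hp : p ∈ Ω)
    (hk0 : k p ≠ 0) :
    pdy (fun q => pdx k q / k q) p = pdx (fun q => pdy k q / k q) p := by
  have hpn := hΩ.mem_nhds hp
  rw [pdy_div ((hkd.pdx hΩ).differentiableAt hpn) (hkd.differentiableAt hpn) hk0,
    pdx_div ((hkd.pdy hΩ).differentiableAt hpn) (hkd.differentiableAt hpn) hk0,
    hkd.pdx_pdy_comm hΩ hp]
  ring

end Laplace

theorem laplace_transformation_minus_general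
    (Ω : Set (ℂ × ℂ)) (hΩ : IsOpen Ω)
    (a b c : ℂ × ℂ → ℂ)
    (ha : DifferentiableOn ℂ a Ω) (hb : DifferentiableOn ℂ b Ω)
    (hc : DifferentiableOn ℂ c Ω)
    (h k : ℂ × ℂ → ℂ)
    (hh : h = fun p => pdx a p + a p * b p - c p)
    (hk : k = fun p => pdy b p + a p * b p - c p)
    (hk0 : ∀ p ∈ Ω, k p ≠ 0)
    (aM bM cM : ℂ × ℂ → ℂ)
    (haM : aM = a)
    (hbM : bM = fun p => b p - pdx k p / k p)
    (hcM : cM = fun p => c p + pdx a p - pdy b p - a p * (pdx k p / k p)) :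
    (∀ u : ℂ × ℂ → ℂ, DifferentiableOn ℂ u Ω →
      (∀ p ∈ Ω, pdx (pdy u) p + a p * pdx u p + b p * pdy u p + c p * u p = 0) →
      ∀ p ∈ Ω,
        pdx (pdy (fun q => pdx u q + b q * u q)) p
          + aM p * pdx (fun q => pdx u q + b q * u q) p
          + bM p * pdy (fun q => pdx u q + b q * u q) p
          + cM p * (pdx u p + b p * u p) = 0) ∧
    (∀ p ∈ Ω, pdx aM p + aM p * bM p - cM p = k p) ∧
    (∀ p ∈ Ω, pdy bM p + aM p * bM p - cM p
        = 2 * k p - h p - pdx (fun q => pdy k q / k q) p) := by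
  subst haM hbM hcM hh
  have hkd : DifferentiableOn ℂ k Ω := hk ▸ ((hb.pdy hΩ).add (ha.mul hb)).sub hc
  refine ⟨fun u hu hMu p hp => laplaceMinus_solves hΩ ha hb hkd hk hu hMu hp (hk0 p hp),
    fun p hp => ?_, fun p hp => ?_⟩
  · simp only [hk]
    ring
  · have hpn := hΩ.mem_nhds hp
    have hdiv : DifferentiableAt ℂ (fun q => pdx k q / k q) p := by
      simpa only [div_eq_mul_inv] using
        ((hkd.pdx hΩ).differentiableAt hpn).fun_mul ((hkd.differentiableAt hpn).fun_inv (hk0 p hp))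
    rw [pdy_sub (hb.differentiableAt hpn) hdiv, pdy_pdx_div_eq_pdx_pdy_div hΩ hkd hp (hk0 p hp)]
    simp only [hk]
    ring

theorem laplace_transformation_minus
    (Ω : Set (ℂ × ℂ)) (hΩ : IsOpen Ω) (hne : Ω.Nonempty)
    (a b c : ℂ × ℂ → ℂ)
    (ha : DifferentiableOn ℂ a Ω) (hb : DifferentiableOn ℂ b Ω)
    (hc : DifferentiableOn ℂ c Ω)
    (h k : ℂ × ℂ → ℂ)
    (hh : h = fun p => pdx a p + a p * b p - c p)
    (hk : k = fun p => pdy b p + a p * b p - c p)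
    (hk0 : ∀ p ∈ Ω, k p ≠ 0)
    (aM bM cM : ℂ × ℂ → ℂ)
    (haM : aM = a)
    (hbM : bM = fun p => b p - pdx k p / k p)
    (hcM : cM = fun p => c p + pdx a p - pdy b p - a p * (pdx k p / k p)) :
    (∀ u : ℂ × ℂ → ℂ, DifferentiableOn ℂ u Ω →
      (∀ p ∈ Ω, pdx (pdy u) p + a p * pdx u p + b p * pdy u p + c p * u p = 0) →
      ∀ p ∈ Ω,
        pdx (pdy (fun q => pdx u q + b q * u q)) p
          + aM p * pdx (fun q => pdx u q + b q * u q) p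
          + bM p * pdy (fun q => pdx u q + b q * u q) p
          + cM p * (pdx u p + b p * u p) = 0) ∧
    (∀ p ∈ Ω, pdx aM p + aM p * bM p - cM p = k p) ∧
    (∀ p ∈ Ω, pdy bM p + aM p * bM p - cM p
        = 2 * k p - h p - pdx (fun q => pdy k q / k q) p) :=
  laplace_transformation_minus_general Ω hΩ a b c ha hb hc h k hh hk hk0 aM bM cM haM hbM hcM
end

section
/- Let N ≥ 2, let u be a holomorphic function on the space of 2×N complex matrices, and let g ∈ SL(2,ℂ). Define v(z) = u(g⁻¹·z) (matrix product of the 2×2 matrix g⁻¹ with the 2×N matrix z). If □_{p,q}u = 0 for all p, q ∈ {0,…,N−1}, then □_{p,q}v = 0 for all p, q ∈ {0,…,N−1}. -/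
/-- Partial derivative of a function of a 2×N complex matrix (viewed as
`Fin 2 → ι → ℂ`) with respect to the entry in row `a`, column `q`. -/
noncomputable def pd {ι : Type} [DecidableEq ι] (a : Fin 2) (q : ι)
    (u : (Fin 2 → ι → ℂ) → ℂ) : (Fin 2 → ι → ℂ) → ℂ :=
  fun z => deriv (fun s : ℂ => u (fun a' q' => z a' q' + if a' = a ∧ q' = q then s else 0)) 0

/-- The operator `□_{p,q} = ∂_{0,p}∂_{1,q} − ∂_{1,p}∂_{0,q}` of the Gelfand system. -/
noncomputable def box {ι : Type} [DecidableEq ι] (p q : ι)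
    (u : (Fin 2 → ι → ℂ) → ℂ) : (Fin 2 → ι → ℂ) → ℂ :=
  fun z => pd 0 p (pd 1 q u) z - pd 1 p (pd 0 q u) z

/-!
Left multiplication by `h` is linear, so the second derivatives of `u ∘ h` at `z` are those of
`u` at `h z` taken in the directions `h eₐₚ = h₀ₐ e₀ₚ + h₁ₐ e₁ₚ`; by bilinearity the
antisymmetric combination `□_{p,q}` picks up exactly the factor `det h`, so
`□_{p,q}(u ∘ h) = det h · (□_{p,q} u) ∘ h`. The only analytic input is that the derivative of a
holomorphic function on a finite-dimensional space is again holomorphic, which follows by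
differentiating Cauchy's formula `Du(y)x = (2π)⁻¹ ∫ e^{-iθ} u(y + e^{iθ}x) dθ` under the integral
sign.
-/

open Metric Real Complex

section FiniteDimensional

variable {𝕜 : Type*} [NontriviallyNormedField 𝕜] [CompleteSpace 𝕜]
  {D E F : Type*} [NormedAddCommGroup D] [NormedSpace 𝕜 D] [NormedAddCommGroup E] [NormedSpace 𝕜 E]
  [FiniteDimensional 𝕜 E] [NormedAddCommGroup F] [NormedSpace 𝕜 F]

theorem differentiable_clm_apply_iff {f : D → E →L[𝕜] F} :
    Differentiable 𝕜 f ↔ ∀ y, Differentiable 𝕜 fun x => f x y := by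
  refine ⟨fun h y => h.clm_apply (differentiable_const y), fun h => ?_⟩
  let d := Module.finrank 𝕜 E
  have hd : d = Module.finrank 𝕜 (Fin d → 𝕜) := (Module.finrank_fin_fun 𝕜).symm
  let e := ((ContinuousLinearEquiv.ofFinrankEq hd).arrowCongr (1 : F ≃L[𝕜] F)).trans
    (ContinuousLinearEquiv.piRing (Fin d))
  rw [← Function.id_comp f, ← e.symm_comp_self]
  exact e.symm.differentiable.comp (differentiable_pi.mpr fun i => h _)

end FiniteDimensional

section LineDeriv

variable {𝕜 E F G : Type*} [NontriviallyNormedField 𝕜] [AddCommGroup E] [Module 𝕜 E]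
  [AddCommGroup F] [Module 𝕜 F] [NormedAddCommGroup G] [NormedSpace 𝕜 G]

theorem lineDeriv_comp_linearMap (u : F → G) (L : E →ₗ[𝕜] F) (z w : E) :
    lineDeriv 𝕜 (u ∘ L) z w = lineDeriv 𝕜 u (L z) (L w) := by
  simp [lineDeriv]

end LineDeriv

section Holomorphic

variable {E F : Type*} [NormedAddCommGroup E] [NormedSpace ℂ E]
  [NormedAddCommGroup F] [NormedSpace ℂ F] {u : E → F}

theorem ContDiff.differentiable_intervalIntegral_smul_comp_add [ProperSpace E]
    (hu : ContDiff ℂ 1 u) {k : ℝ → ℂ} (hk : Continuous k) {γ : ℝ → E} (hγ : Continuous γ)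
    (a b : ℝ) : Differentiable ℂ fun y => ∫ θ in a..b, k θ • u (y + γ θ) := by
  intro y₀
  have hDu := hu.continuous_fderiv one_ne_zero
  obtain ⟨C, hC⟩ := ((isCompact_closedBall y₀ 1).prod isCompact_uIcc).exists_bound_of_continuousOn
    (f := fun p : E × ℝ => k p.2 • fderiv ℂ u (p.1 + γ p.2)) (by fun_prop)
  refine (intervalIntegral.hasFDerivAt_integral_of_dominated_of_fderiv_le
    (F' := fun y θ => k θ • fderiv ℂ u (y + γ θ)) (bound := fun _ => C)
    (ball_mem_nhds y₀ one_pos) (.of_forall fun y => by fun_prop)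
    ((by fun_prop : Continuous _).intervalIntegrable _ _) (by fun_prop)
    (.of_forall fun θ hθ y hy =>
      hC (y, θ) ⟨ball_subset_closedBall hy, Set.uIoc_subset_uIcc hθ⟩)
    intervalIntegrable_const (.of_forall fun θ _ y _ => ?_)).differentiableAt
  exact (((hu.differentiable one_ne_zero) _).hasFDerivAt.comp y
    ((hasFDerivAt_id y).add_const (γ θ))).fun_const_smul (k θ)

variable [CompleteSpace F]

/-- Cauchy's formula on the unit circle for `s ↦ u (y + s • x)`. -/
theorem Differentiable.fderiv_apply_eq_intervalIntegral (hu : Differentiable ℂ u) (y x : E) :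
    fderiv ℂ u y x =
      (2 * π : ℂ)⁻¹ • ∫ θ in 0..2 * π, (circleMap 0 1 θ)⁻¹ • u (y + circleMap 0 1 θ • x) := by
  have hline : Differentiable ℂ fun s : ℂ => u (y + s • x) := by fun_prop
  have hcauchy :=
    (hline.differentiableOn (s := closedBall 0 1)).deriv_eq_smul_circleIntegral one_pos
  have hkernel : ∀ θ : ℝ, _root_.deriv (circleMap 0 1) θ • (1 / (circleMap 0 1 θ - 0) ^ 2) •
      u (y + circleMap 0 1 θ • x) = I • (circleMap 0 1 θ)⁻¹ • u (y + circleMap 0 1 θ • x) := by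
    intro θ
    have hne := circleMap_ne_center (c := 0) (θ := θ) one_ne_zero
    rw [deriv_circleMap, smul_smul, smul_smul]
    congr 1
    field_simp
    simp
  simp only [circleIntegral, hkernel, intervalIntegral.integral_smul] at hcauchy
  rw [← (hu y).lineDeriv_eq_fderiv, lineDeriv, eq_inv_smul_iff₀ (by simp [pi_ne_zero])]
  refine smul_right_injective F I_ne_zero ?_
  beta_reduce
  rw [hcauchy, smul_smul, mul_comm]

lemma continuous_circleMap_zero_one_inv : Continuous fun θ => (circleMap 0 1 θ)⁻¹ :=
  (continuous_circleMap 0 1).inv₀ fun _ => circleMap_ne_center one_ne_zero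

variable [FiniteDimensional ℂ E]

theorem Differentiable.continuous_fderiv (hu : Differentiable ℂ u) :
    Continuous (fderiv ℂ u) := by
  rw [← contDiff_zero (𝕜 := ℂ), contDiff_clm_apply_iff]
  intro x
  simp_rw [contDiff_zero, hu.fderiv_apply_eq_intervalIntegral]
  have hcont := hu.continuous
  exact (intervalIntegral.continuous_parametric_intervalIntegral_of_continuous'
    ((continuous_circleMap_zero_one_inv.comp continuous_snd).smul (by fun_prop)) _ _).const_smul _

theorem Differentiable.differentiable_fderiv (hu : Differentiable ℂ u) :
    Differentiable ℂ (fderiv ℂ u) := by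
  refine differentiable_clm_apply_iff.2 fun x => ?_
  simp_rw [hu.fderiv_apply_eq_intervalIntegral]
  have hC1 : ContDiff ℂ 1 u := contDiff_one_iff_fderiv.2 ⟨hu, hu.continuous_fderiv⟩
  exact (hC1.differentiable_intervalIntegral_smul_comp_add continuous_circleMap_zero_one_inv
    (by fun_prop) _ _).const_smul _

theorem Differentiable.lineDeriv_lineDeriv (hu : Differentiable ℂ u) (y w x : E) :
    lineDeriv ℂ (fun y => lineDeriv ℂ u y x) y w = fderiv ℂ (fderiv ℂ u) y w x := by
  have hfirst : (fun y => lineDeriv ℂ u y x) = fun y => fderiv ℂ u y x :=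
    funext fun y => (hu y).lineDeriv_eq_fderiv
  have hsecond := hu.differentiable_fderiv y
  rw [hfirst, (hsecond.clm_apply (differentiableAt_const x)).lineDeriv_eq_fderiv,
    fderiv_clm_apply hsecond (differentiableAt_const x)]
  simp

end Holomorphic

/-- `Matrix.mulLeftLinearMap` for matrices stored as plain functions, which carry a norm. -/
def Matrix.mulLeftPi {R m n : Type*} (ι : Type*) [CommSemiring R] [Fintype n] (h : Matrix m n R) :
    (n → ι → R) →ₗ[R] m → ι → R where
  toFun z a p := ∑ b, h a b * z b p
  map_add' z w := by ext; simp [mul_add, Finset.sum_add_distrib]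
  map_smul' c z := by ext; simp [Finset.mul_sum, mul_left_comm]

section Gelfand

variable {ι : Type} [DecidableEq ι]

def matrixUnit (a : Fin 2) (p : ι) : Fin 2 → ι → ℂ := Pi.single a (Pi.single p 1)

theorem pd_eq_lineDeriv (a : Fin 2) (q : ι) (u : (Fin 2 → ι → ℂ) → ℂ) (z : Fin 2 → ι → ℂ) :
    pd a q u z = lineDeriv ℂ u z (matrixUnit a q) := by
  simp only [pd, lineDeriv]
  congr! 3 with s
  ext a' q'
  by_cases a' = a <;> by_cases q' = q <;> simp_all [matrixUnit]

theorem Matrix.mulLeftPi_single [Fintype ι] (h : Matrix (Fin 2) (Fin 2) ℂ) (a : Fin 2) (p : ι) :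
    h.mulLeftPi ι (matrixUnit a p) = h 0 a • matrixUnit 0 p + h 1 a • matrixUnit 1 p := by
  ext c q
  fin_cases a <;> fin_cases c <;> by_cases q = p <;> simp_all [Matrix.mulLeftPi, matrixUnit]

theorem pd_pd_comp_linearMap [Fintype ι] {u : (Fin 2 → ι → ℂ) → ℂ} (hu : Differentiable ℂ u)
    (L : (Fin 2 → ι → ℂ) →ₗ[ℂ] Fin 2 → ι → ℂ) (a b : Fin 2) (p q : ι) (z : Fin 2 → ι → ℂ) :
    pd a p (pd b q (u ∘ L)) z =
      fderiv ℂ (fderiv ℂ u) (L z) (L (matrixUnit a p)) (L (matrixUnit b q)) := by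
  have hinner : pd b q (u ∘ L) = (fun y => lineDeriv ℂ u y (L (matrixUnit b q))) ∘ L := by
    funext y
    rw [pd_eq_lineDeriv, lineDeriv_comp_linearMap]
    rfl
  rw [pd_eq_lineDeriv, hinner, lineDeriv_comp_linearMap, hu.lineDeriv_lineDeriv]

theorem pd_pd [Fintype ι] {u : (Fin 2 → ι → ℂ) → ℂ} (hu : Differentiable ℂ u)
    (a b : Fin 2) (p q : ι) (z : Fin 2 → ι → ℂ) :
    pd a p (pd b q u) z = fderiv ℂ (fderiv ℂ u) z (matrixUnit a p) (matrixUnit b q) :=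
  pd_pd_comp_linearMap hu LinearMap.id a b p q z

theorem box_comp_mulLeftPi [Fintype ι] (h : Matrix (Fin 2) (Fin 2) ℂ)
    {u : (Fin 2 → ι → ℂ) → ℂ} (hu : Differentiable ℂ u) (p q : ι) (z : Fin 2 → ι → ℂ) :
    box p q (u ∘ h.mulLeftPi ι) z = h.det * box p q u (h.mulLeftPi ι z) := by
  simp only [box, pd_pd_comp_linearMap hu, pd_pd hu, Matrix.mulLeftPi_single, map_add,
    map_smul, add_apply, FunLike.coe_smul, Pi.smul_apply, smul_eq_mul, Matrix.det_fin_two]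
  ring

end Gelfand

theorem sl2_action_preserves_gelfand_solutions_general
    (N : ℕ)
    (u : (Fin 2 → Fin N → ℂ) → ℂ) (hu : Differentiable ℂ u)
    (g : Matrix.SpecialLinearGroup (Fin 2) ℂ)
    (v : (Fin 2 → Fin N → ℂ) → ℂ)
    (hv : ∀ z, v z = u (fun a p => ∑ b : Fin 2,
      ((g⁻¹ : Matrix.SpecialLinearGroup (Fin 2) ℂ) : Matrix (Fin 2) (Fin 2) ℂ) a b * z b p))
    (hbox : ∀ p q : Fin N, ∀ z, box p q u z = 0) :
    ∀ p q : Fin N, ∀ z, box p q v z = 0 := by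
  have hv' : v = u ∘ Matrix.mulLeftPi (Fin N) (g⁻¹ : Matrix.SpecialLinearGroup (Fin 2) ℂ) :=
    funext hv
  intro p q z
  rw [hv', box_comp_mulLeftPi _ hu, hbox, mul_zero]

theorem sl2_action_preserves_gelfand_solutions
    (N : ℕ) (hN : 2 ≤ N)
    (u : (Fin 2 → Fin N → ℂ) → ℂ) (hu : Differentiable ℂ u)
    (g : Matrix.SpecialLinearGroup (Fin 2) ℂ)
    (v : (Fin 2 → Fin N → ℂ) → ℂ)
    (hv : ∀ z, v z = u (fun a p => ∑ b : Fin 2,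
      ((g⁻¹ : Matrix.SpecialLinearGroup (Fin 2) ℂ) : Matrix (Fin 2) (Fin 2) ℂ) a b * z b p))
    (hbox : ∀ p q : Fin N, ∀ z, box p q u z = 0) :
    ∀ p q : Fin N, ∀ z, box p q v z = 0 :=
  sl2_action_preserves_gelfand_solutions_general N u hu g v hv hbox
end

section
/- Let λ = (n_1,…,n_ℓ) be a partition of N and let h be the N×N block-diagonal matrix with j-th diagonal block h^{(j)} = Σ_{0≤k<n_j} h^{(j)}_k Λ^k, where Λ is the n_j×n_j shift matrix (Λ_{a,b} = δ_{a+1,b}) and h^{(j)}_k ∈ ℂ. Write the columns of a 2×N matrix z in blocks z = (z^{(1)},…,z^{(ℓ)}) with z^{(m)} of size 2×n_m, and write ∂^{(m)}_{a,k} for the partial derivative in the (a,k)-entry of the m-th block. For 1 ≤ i, j ≤ ℓ and 0 ≤ p < n_i, 0 ≤ q < n_j set □^{(i,j)}_{p,q}u = ∂^{(i)}_{0,p}∂^{(j)}_{1,q}u − ∂^{(i)}_{1,p}∂^{(j)}_{0,q}u. Then for every holomorphic u on the space of 2×N matrices, the function v(z) = u(z·h) satisfies (□^{(i,j)}_{p,q}v)(z)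 = Σ_{p≤a<n_i} Σ_{q≤b<n_j} (□^{(i,j)}_{a,b}u)(z·h)·h^{(i)}_{a−p}·h^{(j)}_{b−q}. Consequently, if □^{(i,j)}_{p,q}u = 0 for all i, j, p, q, then □^{(i,j)}_{p,q}v = 0 for all i, j, p, q. -/
/-- Column index set for a 2×N matrix written in blocks according to the
partition `λ = (n 0, …, n (ℓ-1))`: a block label together with a position in the block. -/
abbrev Idx (ℓ : ℕ) (n : Fin ℓ → ℕ) : Type := (j : Fin ℓ) × Fin (n j)

/-!
Right multiplication by `h` is a linear change of variables `z ↦ L z`, so by the chain rule the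
second derivative of `v = u ∘ L` at `z` is that of `u` at `L z`, evaluated on the images under `L`
of the coordinate directions. Since `L` multiplies every row by the same matrix `h`, the image of
the matrix unit at `(a, (i, p))` is `Σ_{a'} h_{p a'} E_{a, (i, a')}`, and bilinearity turns each
`□^{(i,j)}_{p,q} v` into the stated combination of the operators `□^{(i,j)}_{a,b} u` at `z·h`.

The chain rule needs `u` to be twice differentiable: a holomorphic function on a
finite-dimensional space is `C^∞`, because differentiating the Cauchy formula
`Du(z) y = (2πi)⁻¹ ∮ ζ⁻² u(z + ζ y) dζ` under the integral sign shows that every directional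
derivative is again holomorphic.
-/

open Metric Set Real Complex

section Holomorphic

variable {E F : Type*} [NormedAddCommGroup E] [NormedSpace ℂ E]
  [NormedAddCommGroup F] [NormedSpace ℂ F]

theorem Differentiable.fderiv_apply_eq_circleIntegral [CompleteSpace F] {u : E → F}
    (hu : Differentiable ℂ u) (z y : E) :
    fderiv ℂ u z y = (2 * π * I : ℂ)⁻¹ • ∮ ζ in C(0, 1), (ζ ^ 2)⁻¹ • u (z + ζ • y) := by
  have hline : Differentiable ℂ fun s : ℂ => u (z + s • y) := by fun_prop
  have := two_pi_I_inv_smul_circleIntegral_sub_sq_inv_smul_of_differentiable isOpen_univ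
    (subset_univ _) hline.differentiableOn (mem_ball_self (x := (0 : ℂ)) one_pos)
  rw [← (hu z).lineDeriv_eq_fderiv, lineDeriv, ← this]
  simp

variable [FiniteDimensional ℂ E]

theorem Differentiable.exists_norm_fderiv_le_on_closedBall {u : E → F}
    (hu : Differentiable ℂ u) (w : E) (R : ℝ) :
    ∃ C, ∀ z ∈ closedBall w R, ‖fderiv ℂ u z‖ ≤ C := by
  obtain ⟨M, hM⟩ := (isCompact_closedBall w (R + 1)).exists_bound_of_continuousOn
    hu.continuous.continuousOn
  refine ⟨2 * M, fun z hz => ?_⟩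
  have hmaps : MapsTo u (ball z 1) (closedBall (u z) (2 * M)) := fun x hx => by
    have hx' : x ∈ closedBall w (R + 1) :=
      closedBall_subset_closedBall' (by linarith [mem_closedBall.mp hz])
        (ball_subset_closedBall hx)
    have hz' : z ∈ closedBall w (R + 1) := closedBall_subset_closedBall (by linarith) hz
    rw [mem_closedBall, dist_eq_norm]
    linarith [norm_sub_le (u x) (u z), hM x hx', hM z hz']
  simpa using norm_fderiv_le_div_of_mapsTo_ball hu.differentiableOn hmaps one_pos

variable [CompleteSpace F] [SecondCountableTopology F]

theorem Differentiable.differentiable_fderiv_apply {u : E → F} (hu : Differentiable ℂ u)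
    (y : E) : Differentiable ℂ fun z => fderiv ℂ u z y := by
  borelize E
  intro z₀
  set c : ℝ → ℂ := circleMap 0 1
  set k : ℝ → ℂ := fun θ => c θ * I * (c θ ^ 2)⁻¹
  have hc : ∀ θ, ‖c θ‖ = 1 := fun θ => by simp [c]
  have hk : ∀ θ, ‖k θ‖ = 1 := fun θ => by simp [k, hc]
  have hc_cont : Continuous c := continuous_circleMap 0 1
  have hk_cont : Continuous k := (hc_cont.mul_const I).mul <|
    (hc_cont.pow 2).inv₀ fun θ => pow_ne_zero 2 (circleMap_ne_center one_ne_zero)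
  have hrep : (fun z => fderiv ℂ u z y) =
      fun z => (2 * π * I : ℂ)⁻¹ • ∫ θ in 0..2 * π, k θ • u (z + c θ • y) := by
    funext z
    simp [hu.fderiv_apply_eq_circleIntegral, circleIntegral, c, k, smul_smul]
  have hcont : ∀ z, Continuous fun θ => k θ • u (z + c θ • y) := fun z =>
    hk_cont.smul (hu.continuous.comp (by fun_prop))
  obtain ⟨C, hC⟩ := hu.exists_norm_fderiv_le_on_closedBall z₀ (1 + ‖y‖)
  have hmem : ∀ z ∈ ball z₀ 1, ∀ θ, z + c θ • y ∈ closedBall z₀ (1 + ‖y‖) := by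
    intro z hz θ
    rw [mem_closedBall, dist_eq_norm, add_sub_right_comm]
    calc _ ≤ ‖z - z₀‖ + ‖c θ • y‖ := norm_add_le _ _
      _ ≤ 1 + ‖y‖ := by
        rw [norm_smul, hc, one_mul]
        linarith [mem_ball_iff_norm.mp hz]
  have hderiv := intervalIntegral.hasFDerivAt_integral_of_dominated_of_fderiv_le
    (μ := MeasureTheory.volume) (a := 0) (b := 2 * π) (bound := fun _ => C)
    (F := fun z θ => k θ • u (z + c θ • y))
    (F' := fun z θ => k θ • fderiv ℂ u (z + c θ • y)) (ball_mem_nhds z₀ one_pos)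
    (Filter.Eventually.of_forall fun z => (hcont z).aestronglyMeasurable)
    ((hcont z₀).intervalIntegrable _ _)
    (hk_cont.measurable.smul ((measurable_fderiv ℂ u).comp (by fun_prop))).aestronglyMeasurable
    (Filter.Eventually.of_forall fun θ _ z hz => by
      simpa [norm_smul, hk] using hC _ (hmem z hz θ))
    intervalIntegrable_const
    (Filter.Eventually.of_forall fun θ _ z _ =>
      ((hu (z + c θ • y)).hasFDerivAt.comp z
        ((hasFDerivAt_id z).add_const (c θ • y))).const_smul (k θ))
  rw [hrep]
  exact (hderiv.const_smul _).differentiableAt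

theorem Differentiable.contDiff_of_finiteDimensional {u : E → F} (hu : Differentiable ℂ u)
    (n : ℕ) : ContDiff ℂ n u := by
  induction n generalizing u with
  | zero => exact contDiff_zero.mpr hu.continuous
  | succ n ih =>
    rw [Nat.cast_succ, contDiff_succ_iff_fderiv_apply]
    exact ⟨hu, by simp, fun y => ih (hu.differentiable_fderiv_apply y)⟩

end Holomorphic

theorem fderiv_fderiv_comp_continuousLinearMap {𝕜 E F G : Type*} [NontriviallyNormedField 𝕜]
    [NormedAddCommGroup E] [NormedSpace 𝕜 E] [NormedAddCommGroup F] [NormedSpace 𝕜 F]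
    [NormedAddCommGroup G] [NormedSpace 𝕜 G] {f : F → G} (hf : ContDiff 𝕜 2 f) (L : E →L[𝕜] F)
    (z x y : E) :
    fderiv 𝕜 (fderiv 𝕜 (f ∘ L)) z x y = fderiv 𝕜 (fderiv 𝕜 f) (L z) (L x) (L y) := by
  simpa [iteratedFDeriv_two_apply] using
    congr($(L.iteratedFDeriv_comp_right hf z le_rfl) ![x, y])

theorem Pi.single_eq_sum_smul_single_single {m ι R : Type*} [Fintype ι] [DecidableEq m]
    [DecidableEq ι] [Semiring R] (a : m) (r : ι → R) :
    Pi.single a r = ∑ c, r c • (Pi.single a (Pi.single c 1) : m → ι → R) := by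
  ext a' c'
  by_cases ha : a' = a
  · subst ha
    simp [Pi.single_apply]
  · simp [ha]

section GelfandOperators

variable {ι : Type} [Fintype ι] [DecidableEq ι]

theorem pd_eq_fderiv {f : (Fin 2 → ι → ℂ) → ℂ} {z : Fin 2 → ι → ℂ}
    (hf : DifferentiableAt ℂ f z) (a : Fin 2) (c : ι) :
    pd a c f z = fderiv ℂ f z (Pi.single a (Pi.single c 1)) := by
  rw [← hf.lineDeriv_eq_fderiv, lineDeriv, pd]
  congr! 3 with s
  ext a' c'
  by_cases ha : a' = a <;> by_cases hc : c' = c <;> simp [ha, hc]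

theorem pd_pd_eq_fderiv_fderiv {f : (Fin 2 → ι → ℂ) → ℂ} (hf : ContDiff ℂ 2 f)
    (a b : Fin 2) (p q : ι) (z : Fin 2 → ι → ℂ) :
    pd a p (pd b q f) z =
      fderiv ℂ (fderiv ℂ f) z (Pi.single a (Pi.single p 1)) (Pi.single b (Pi.single q 1)) := by
  have hf1 : Differentiable ℂ f := hf.differentiable two_ne_zero
  have hf2 : Differentiable ℂ (fderiv ℂ f) :=
    (hf.fderiv_right (m := 1) le_rfl).differentiable one_ne_zero
  have hpd : pd b q f = fun w => fderiv ℂ f w (Pi.single b (Pi.single q 1)) :=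
    funext fun w => pd_eq_fderiv (hf1 w) b q
  have hderiv :=
    (hf2 z).hasFDerivAt.clm_apply (hasFDerivAt_const (Pi.single b (Pi.single q 1)) z)
  rw [hpd, pd_eq_fderiv hderiv.differentiableAt, hderiv.fderiv]
  simp

theorem box_eq_fderiv_fderiv {f : (Fin 2 → ι → ℂ) → ℂ} (hf : ContDiff ℂ 2 f)
    (p q : ι) (z : Fin 2 → ι → ℂ) :
    box p q f z =
      fderiv ℂ (fderiv ℂ f) z (Pi.single 0 (Pi.single p 1)) (Pi.single 1 (Pi.single q 1)) -
      fderiv ℂ (fderiv ℂ f) z (Pi.single 1 (Pi.single p 1)) (Pi.single 0 (Pi.single q 1)) := by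
  rw [box, pd_pd_eq_fderiv_fderiv hf, pd_pd_eq_fderiv_fderiv hf]

end GelfandOperators

section MulRight

variable {m ι : Type} [Fintype m] [Fintype ι]

noncomputable def mulRightCLM (H : Matrix ι ι ℂ) : (m → ι → ℂ) →L[ℂ] (m → ι → ℂ) :=
  LinearMap.toContinuousLinearMap
    (LinearMap.pi fun a => (Matrix.vecMulLinear H).comp (LinearMap.proj a))

theorem mulRightCLM_apply (H : Matrix ι ι ℂ) (z : m → ι → ℂ) (a : m) (c : ι) :
    mulRightCLM H z a c = ∑ c', z a c' * H c' c := rfl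

theorem mulRightCLM_single_single [DecidableEq m] [DecidableEq ι] (H : Matrix ι ι ℂ) (a : m)
    (c : ι) : mulRightCLM H (Pi.single a (Pi.single c 1)) = Pi.single a (H c) := by
  ext a' c'
  by_cases ha : a' = a
  · subst ha
    simp [mulRightCLM_apply, Pi.single_apply]
  · simp [mulRightCLM_apply, ha]

end MulRight

theorem box_comp_mulRightCLM {ι : Type} [Fintype ι] [DecidableEq ι]
    {u : (Fin 2 → ι → ℂ) → ℂ} (hu : ContDiff ℂ 2 u) (H : Matrix ι ι ℂ) (p q : ι)
    (z : Fin 2 → ι → ℂ) :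
    box p q (fun z => u (mulRightCLM H z)) z =
      ∑ c, ∑ c', H p c * H q c' * box c c' u (mulRightCLM H z) := by
  have expand : ∀ a b : Fin 2,
      fderiv ℂ (fderiv ℂ (u ∘ mulRightCLM H)) z (Pi.single a (Pi.single p 1))
          (Pi.single b (Pi.single q 1)) =
        ∑ c, ∑ c', H p c * H q c' * fderiv ℂ (fderiv ℂ u) (mulRightCLM H z)
          (Pi.single a (Pi.single c 1)) (Pi.single b (Pi.single c' 1)) := by
    intro a b
    rw [fderiv_fderiv_comp_continuousLinearMap hu, mulRightCLM_single_single,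
      mulRightCLM_single_single, Pi.single_eq_sum_smul_single_single a (H p),
      Pi.single_eq_sum_smul_single_single b (H q)]
    simp only [map_sum, map_smul, sum_apply, smul_apply, smul_eq_mul, Finset.mul_sum]
    rw [Finset.sum_comm]
    simp only [mul_assoc, mul_left_comm]
  rw [show (fun z => u (mulRightCLM H z)) = u ∘ mulRightCLM H from rfl,
    box_eq_fderiv_fderiv (hu.comp (mulRightCLM H).contDiff), expand, expand]
  simp only [box_eq_fderiv_fderiv hu, ← Finset.sum_sub_distrib, mul_sub]

theorem Fintype.sum_sigma_eq_sum_fiber {α M : Type*} {β : α → Type*} [Fintype α]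
    [∀ a, Fintype (β a)] [AddCommMonoid M] (i : α) (f : Sigma β → M)
    (hf : ∀ c : Sigma β, c.1 ≠ i → f c = 0) :
    ∑ c, f c = ∑ b : β i, f ⟨i, b⟩ := by
  rw [Fintype.sum_sigma, Finset.sum_eq_single i
    (fun j _ hj => Finset.sum_eq_zero fun b _ => hf ⟨j, b⟩ hj) (by simp)]

section BlockToeplitz

variable {ℓ : ℕ} {n : Fin ℓ → ℕ}

/-- The block-diagonal matrix `h` whose `j`-th block is `Σ_k hcoef j k • Λ^k`. -/
def blockToeplitz (hcoef : Fin ℓ → ℕ → ℂ) : Matrix (Idx ℓ n) (Idx ℓ n) ℂ := fun c' c =>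
  if c'.1 = c.1 ∧ (c'.2 : ℕ) ≤ c.2 then hcoef c.1 (c.2 - c'.2) else 0

theorem mulRightCLM_blockToeplitz_apply {m : Type} [Fintype m] (hcoef : Fin ℓ → ℕ → ℂ)
    (z : m → Idx ℓ n → ℂ) (a : m) (c : Idx ℓ n) :
    mulRightCLM (blockToeplitz hcoef) z a c = ∑ b : Fin (n c.1),
      if (b : ℕ) ≤ (c.2 : ℕ) then z a ⟨c.1, b⟩ * hcoef c.1 ((c.2 : ℕ) - (b : ℕ)) else 0 := by
  rw [mulRightCLM_apply,
    Fintype.sum_sigma_eq_sum_fiber c.1 _ fun c' hc' => by simp [blockToeplitz, hc']]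
  simp [blockToeplitz, mul_ite]

theorem sum_sum_blockToeplitz_mul (hcoef : Fin ℓ → ℕ → ℂ) (i j : Fin ℓ) (p : Fin (n i))
    (q : Fin (n j)) (g : Idx ℓ n → Idx ℓ n → ℂ) :
    ∑ c, ∑ c', blockToeplitz hcoef ⟨i, p⟩ c * blockToeplitz hcoef ⟨j, q⟩ c' * g c c' =
      ∑ a : Fin (n i), ∑ b : Fin (n j), if (p : ℕ) ≤ (a : ℕ) ∧ (q : ℕ) ≤ (b : ℕ) then
        g ⟨i, a⟩ ⟨j, b⟩ * hcoef i ((a : ℕ) - (p : ℕ)) * hcoef j ((b : ℕ) - (q : ℕ)) else 0 := by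
  rw [Fintype.sum_sigma_eq_sum_fiber i _ fun c hc => by simp [blockToeplitz, Ne.symm hc]]
  refine Finset.sum_congr rfl fun a _ => ?_
  rw [Fintype.sum_sigma_eq_sum_fiber j _ fun c hc => by simp [blockToeplitz, Ne.symm hc]]
  refine Finset.sum_congr rfl fun b _ => ?_
  simp only [blockToeplitz, true_and, ite_and]
  split_ifs <;> ring

end BlockToeplitz

theorem gelfand_system_invariant_under_Hlambda_general
    (ℓ : ℕ) (n : Fin ℓ → ℕ)
    (hcoef : Fin ℓ → ℕ → ℂ)
    (u v : (Fin 2 → Idx ℓ n → ℂ) → ℂ)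
    (hu : Differentiable ℂ u)
    (zh : (Fin 2 → Idx ℓ n → ℂ) → (Fin 2 → Idx ℓ n → ℂ))
    (hzh : ∀ z (a : Fin 2) (c : Idx ℓ n),
      zh z a c = ∑ b : Fin (n c.1),
        if (b : ℕ) ≤ (c.2 : ℕ) then z a ⟨c.1, b⟩ * hcoef c.1 ((c.2 : ℕ) - (b : ℕ)) else 0)
    (hv : ∀ z, v z = u (zh z)) :
    (∀ (i j : Fin ℓ) (p : Fin (n i)) (q : Fin (n j)) (z : Fin 2 → Idx ℓ n → ℂ),
      box (⟨i, p⟩ : Idx ℓ n) (⟨j, q⟩ : Idx ℓ n) v z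
        = ∑ a : Fin (n i), ∑ b : Fin (n j),
            if (p : ℕ) ≤ (a : ℕ) ∧ (q : ℕ) ≤ (b : ℕ) then
              box (⟨i, a⟩ : Idx ℓ n) (⟨j, b⟩ : Idx ℓ n) u (zh z)
                * hcoef i ((a : ℕ) - (p : ℕ)) * hcoef j ((b : ℕ) - (q : ℕ))
            else 0) ∧
    ((∀ (i j : Fin ℓ) (p : Fin (n i)) (q : Fin (n j)) (z : Fin 2 → Idx ℓ n → ℂ),
        box (⟨i, p⟩ : Idx ℓ n) (⟨j, q⟩ : Idx ℓ n) u z = 0) →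
      ∀ (i j : Fin ℓ) (p : Fin (n i)) (q : Fin (n j)) (z : Fin 2 → Idx ℓ n → ℂ),
        box (⟨i, p⟩ : Idx ℓ n) (⟨j, q⟩ : Idx ℓ n) v z = 0) := by
  have hzh' : zh = mulRightCLM (blockToeplitz hcoef) := funext fun z => funext₂ fun a c =>
    (hzh z a c).trans (mulRightCLM_blockToeplitz_apply ..).symm
  have hv' : v = fun z => u (mulRightCLM (blockToeplitz hcoef) z) :=
    funext fun z => by rw [hv, hzh']
  have hbox : ∀ (i j : Fin ℓ) (p : Fin (n i)) (q : Fin (n j)) z,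
      box (⟨i, p⟩ : Idx ℓ n) ⟨j, q⟩ v z = ∑ a : Fin (n i), ∑ b : Fin (n j),
        if (p : ℕ) ≤ (a : ℕ) ∧ (q : ℕ) ≤ (b : ℕ) then
          box (⟨i, a⟩ : Idx ℓ n) ⟨j, b⟩ u (zh z)
            * hcoef i ((a : ℕ) - (p : ℕ)) * hcoef j ((b : ℕ) - (q : ℕ)) else 0 := by
    intro i j p q z
    rw [hv', box_comp_mulRightCLM (hu.contDiff_of_finiteDimensional 2),
      sum_sum_blockToeplitz_mul, hzh']
  exact ⟨hbox, fun hu0 i j p q z => by simp [hbox, hu0]⟩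

theorem gelfand_system_invariant_under_Hlambda
    (ℓ N : ℕ) (n : Fin ℓ → ℕ) (hn : ∀ j, 0 < n j) (hN : ∑ j, n j = N)
    (hcoef : Fin ℓ → ℕ → ℂ)
    (u v : (Fin 2 → Idx ℓ n → ℂ) → ℂ)
    (hu : Differentiable ℂ u)
    (zh : (Fin 2 → Idx ℓ n → ℂ) → (Fin 2 → Idx ℓ n → ℂ))
    (hzh : ∀ z (a : Fin 2) (c : Idx ℓ n),
      zh z a c = ∑ b : Fin (n c.1),
        if (b : ℕ) ≤ (c.2 : ℕ) then z a ⟨c.1, b⟩ * hcoef c.1 ((c.2 : ℕ) - (b : ℕ)) else 0)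
    (hv : ∀ z, v z = u (zh z)) :
    (∀ (i j : Fin ℓ) (p : Fin (n i)) (q : Fin (n j)) (z : Fin 2 → Idx ℓ n → ℂ),
      box (⟨i, p⟩ : Idx ℓ n) (⟨j, q⟩ : Idx ℓ n) v z
        = ∑ a : Fin (n i), ∑ b : Fin (n j),
            if (p : ℕ) ≤ (a : ℕ) ∧ (q : ℕ) ≤ (b : ℕ) then
              box (⟨i, a⟩ : Idx ℓ n) (⟨j, b⟩ : Idx ℓ n) u (zh z)
                * hcoef i ((a : ℕ) - (p : ℕ)) * hcoef j ((b : ℕ) - (q : ℕ))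
            else 0) ∧
    ((∀ (i j : Fin ℓ) (p : Fin (n i)) (q : Fin (n j)) (z : Fin 2 → Idx ℓ n → ℂ),
        box (⟨i, p⟩ : Idx ℓ n) (⟨j, q⟩ : Idx ℓ n) u z = 0) →
      ∀ (i j : Fin ℓ) (p : Fin (n i)) (q : Fin (n j)) (z : Fin 2 → Idx ℓ n → ℂ),
        box (⟨i, p⟩ : Idx ℓ n) (⟨j, q⟩ : Idx ℓ n) v z = 0) :=
  gelfand_system_invariant_under_Hlambda_general ℓ n hcoef u v hu zh hzh hv
end
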